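/- Assume 0 ≤ h_d < 1 and suppose σ > 0 satisfies vᵀE(B + h_p⟨B⟩)RBᵀv ≥ σ|v|₂² for all v ∈ ℝ^N. Let d : [0,∞) → ℝ^N be measurable with ∫₀^∞ |d(s)|₂² ds < ∞ and let (p, Δ) : [0,∞) → ℝ^N × ℝ^N be differentiable and satisfy ṗ(t) = −(B + h_p⟨B⟩)RBᵀ(M⁻¹p(t) − v₀𝟙) + (B + h_d⟨B⟩)AΔ(t) + d(t), Δ̇(t) = −Bᵀ(M⁻¹p(t) − v₀𝟙) for all t ≥ 0. Then for every t ≥ 0, H_Δ(p(t), Δ(t)) ≤ H_Δ(p(0), Δ(0)) + (1/(2σ)) ∫₀^∞ |d(s)|₂² ds. -/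

import Mathlib

open Matrix MeasureTheory Real

/-- The N×N matrix with 1 on the diagonal and -1 on the first superdiagonal. -/
noncomputable def Bmat (N : ℕ) : Matrix (Fin N) (Fin N) ℝ :=
  Matrix.of fun i j => if j = i then 1 else if (j : ℕ) = (i : ℕ) + 1 then -1 else 0

/-- Entrywise absolute value of `Bmat N`. -/
noncomputable def absB (N : ℕ) : Matrix (Fin N) (Fin N) ℝ :=
  Matrix.of fun i j => |Bmat N i j|

/-- Euclidean norm of a vector in ℝ^N. -/
noncomputable def norm2 {N : ℕ} (x : Fin N → ℝ) : ℝ := Real.sqrt (x ⬝ᵥ x)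

/-- The Hamiltonian H(p, Δ) = ½(p − v₀M𝟙)ᵀ M⁻¹ (p − v₀M𝟙) + ½ Δᵀ A Δ. -/
noncomputable def Ham {N : ℕ} (v0 : ℝ) (m a : Fin N → ℝ) (p Δ : Fin N → ℝ) : ℝ :=
  (1/2) * ((p - v0 • (Matrix.diagonal m *ᵥ fun _ => 1)) ⬝ᵥ
      (Matrix.diagonal (fun i => (m i)⁻¹) *ᵥ (p - v0 • (Matrix.diagonal m *ᵥ fun _ => 1)))) +
  (1/2) * (Δ ⬝ᵥ (Matrix.diagonal a *ᵥ Δ))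

/-- The scaled Hamiltonian H_Δ(p, Δ) = ½(p − v₀M𝟙)ᵀ E M⁻¹ (p − v₀M𝟙) + ½(1+h_d) Δᵀ E A Δ,
where E = diag(1, q, …, q^{N−1}) with q = (1−h_d)/(1+h_d). -/
noncomputable def HamD {N : ℕ} (hd v0 : ℝ) (m a : Fin N → ℝ) (p Δ : Fin N → ℝ) : ℝ :=
  (1/2) * ((p - v0 • (Matrix.diagonal m *ᵥ fun _ => 1)) ⬝ᵥ
      ((Matrix.diagonal (fun i : Fin N => ((1 - hd) / (1 + hd)) ^ (i : ℕ)) *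
        Matrix.diagonal (fun i => (m i)⁻¹)) *ᵥ
          (p - v0 • (Matrix.diagonal m *ᵥ fun _ => 1)))) +
  (1/2) * (1 + hd) * (Δ ⬝ᵥ ((Matrix.diagonal (fun i : Fin N => ((1 - hd) / (1 + hd)) ^ (i : ℕ)) *
      Matrix.diagonal a) *ᵥ Δ))

/-!
Along a trajectory put z = M⁻¹p − v₀𝟙; then d/dt H_Δ = zᵀEṗ + (1+h_d)ΔᵀEAΔ̇. The geometric
weights E are exactly those with E(B + h_d⟨B⟩) = (1+h_d)BE, so the two coupling terms through Δ
cancel and d/dt H_Δ = −zᵀE(B + h_p⟨B⟩)RBᵀz + zᵀEd ≤ −σ|z|² + zᵀEd. As |q| ≤ 1, Young's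
inequality bounds this by |d|²/(4σ), and integrating over [0, t] gives the estimate.
-/

section VectorCalculus

variable {n : Type*} [Fintype n] {f g : ℝ → n → ℝ} {f' g' : n → ℝ} {t : ℝ}

theorem HasDerivAt.dotProduct (hf : HasDerivAt f f' t) (hg : HasDerivAt g g' t) :
    HasDerivAt (fun s => f s ⬝ᵥ g s) (f' ⬝ᵥ g t + f t ⬝ᵥ g') t := by
  simpa [_root_.dotProduct, Finset.sum_add_distrib] using
    HasDerivAt.fun_sum fun i _ => (hasDerivAt_pi.1 hf i).mul (hasDerivAt_pi.1 hg i)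

theorem HasDerivAt.mulVec {m : Type*} (S : Matrix m n ℝ) (hf : HasDerivAt f f' t) :
    HasDerivAt (fun s => S *ᵥ f s) (S *ᵥ f') t :=
  hasDerivAt_pi.2 fun i => by
    simpa [Matrix.mulVec, _root_.dotProduct] using
      HasDerivAt.fun_sum fun j _ => (hasDerivAt_pi.1 hf j).const_mul (S i j)

theorem HasDerivAt.dotProduct_mulVec_self {S : Matrix n n ℝ} (hS : S.IsSymm)
    (hf : HasDerivAt f f' t) :
    HasDerivAt (fun s => f s ⬝ᵥ S *ᵥ f s) (2 * (f t ⬝ᵥ S *ᵥ f')) t := by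
  convert hf.dotProduct (hf.mulVec S) using 1
  have hsymm := dotProduct_transpose_mulVec S f' (f t)
  rw [hS.eq] at hsymm
  rw [hsymm]
  ring

end VectorCalculus

theorem hasDerivAt_HamD {N : ℕ} (hd v0 : ℝ) {m : Fin N → ℝ} (hm : ∀ i, m i ≠ 0)
    (a : Fin N → ℝ) {p Δ : ℝ → Fin N → ℝ} {p' Δ' : Fin N → ℝ} {t : ℝ}
    (hp : HasDerivAt p p' t) (hΔ : HasDerivAt Δ Δ' t) :
    HasDerivAt (fun s => HamD hd v0 m a (p s) (Δ s))
      ((diagonal (fun i => (m i)⁻¹) *ᵥ p t - v0 • (fun _ : Fin N => (1:ℝ))) ⬝ᵥ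
          diagonal (fun i : Fin N => ((1 - hd) / (1 + hd)) ^ (i : ℕ)) *ᵥ p'
        + (1 + hd) * (Δ t ⬝ᵥ (diagonal (fun i : Fin N => ((1 - hd) / (1 + hd)) ^ (i : ℕ)) *
            diagonal a) *ᵥ Δ')) t := by
  set e : Fin N → ℝ := fun i => ((1 - hd) / (1 + hd)) ^ (i : ℕ)
  set w := p t - v0 • (diagonal m *ᵥ fun _ => 1)
  have hkin := ((hp.sub_const (v0 • (diagonal m *ᵥ fun _ => 1))).dotProduct_mulVec_self
    (S := diagonal e * diagonal fun i => (m i)⁻¹)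
    (by rw [diagonal_mul_diagonal]; exact isSymm_diagonal _)).const_mul (1 / 2)
  have hpot := (hΔ.dotProduct_mulVec_self (S := diagonal e * diagonal a)
    (by rw [diagonal_mul_diagonal]; exact isSymm_diagonal _)).const_mul ((1 / 2) * (1 + hd))
  have hmomentum : w ⬝ᵥ (diagonal e * diagonal fun i => (m i)⁻¹) *ᵥ p'
      = (diagonal (fun i => (m i)⁻¹) *ᵥ p t - v0 • fun _ => 1) ⬝ᵥ diagonal e *ᵥ p' := by
    simp only [w, _root_.dotProduct, mulVec_diagonal, diagonal_mul_diagonal, Pi.sub_apply,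
      Pi.smul_apply, smul_eq_mul]
    exact Finset.sum_congr rfl fun i _ => by field_simp [hm i]
  exact (hkin.add hpot).congr_deriv (by rw [← hmomentum]; ring)

theorem diagonal_geometric_mul_Bmat_add_smul_absB {N : ℕ} {h : ℝ} (h1 : 1 + h ≠ 0) :
    diagonal (fun i : Fin N => ((1 - h) / (1 + h)) ^ (i : ℕ)) * (Bmat N + h • absB N)
      = (1 + h) • (Bmat N * diagonal (fun i : Fin N => ((1 - h) / (1 + h)) ^ (i : ℕ))) := by
  ext i j
  simp only [diagonal_mul, mul_diagonal, Matrix.add_apply, Matrix.smul_apply, smul_eq_mul]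
  by_cases hji : j = i
  · subst hji
    simp only [Bmat, absB, of_apply, ↓reduceIte, abs_one, mul_one, one_mul]
    ring
  by_cases hsucc : (j : ℕ) = (i : ℕ) + 1
  · simp only [Bmat, absB, of_apply, hji, if_false, hsucc, if_true, abs_neg, abs_one, pow_succ]
    field_simp
    ring
  · simp [Bmat, absB, hji, hsucc]

theorem abs_geometric_weight_le_one {h : ℝ} (h0 : 0 ≤ h) (k : ℕ) :
    |((1 - h) / (1 + h)) ^ k| ≤ 1 := by
  have h1 : 0 < 1 + h := by linarith
  rw [abs_pow]
  refine pow_le_one₀ (abs_nonneg _) ?_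
  rw [abs_div, abs_of_pos h1, div_le_one h1, abs_le]
  constructor <;> linarith

section PowerBalance

variable {n : Type*} [Fintype n] [DecidableEq n]

theorem dotProduct_diagonal_mulVec_le {e : n → ℝ} (he : ∀ i, |e i| ≤ 1) {σ : ℝ} (hσ : 0 < σ)
    (z d : n → ℝ) :
    z ⬝ᵥ diagonal e *ᵥ d ≤ σ * (z ⬝ᵥ z) + 1 / (4 * σ) * (d ⬝ᵥ d) := by
  simp only [dotProduct, mulVec_diagonal, Finset.mul_sum, ← Finset.sum_add_distrib]
  refine Finset.sum_le_sum fun i _ => ?_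
  have hei : e i ^ 2 ≤ 1 := by
    rw [← sq_abs]; exact pow_le_one₀ (abs_nonneg _) (he i)
  -- Young: 4σ·z·(e d) ≤ (2σz)² + (e d)² ≤ 4σ²z² + d²
  rw [div_mul_eq_mul_div, one_mul, ← sub_nonneg, show σ * (z i * z i) + d i * d i / (4 * σ)
      - z i * (e i * d i) = ((2 * σ * z i - e i * d i) ^ 2 + (1 - e i ^ 2) * d i ^ 2) / (4 * σ)
      by field_simp; ring]
  have := mul_nonneg (sub_nonneg.2 hei) (sq_nonneg (d i))
  positivity

theorem cross_terms_cancel {B Bh : Matrix n n ℝ} {e : n → ℝ} {h : ℝ}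
    (hcomm : diagonal e * Bh = (1 + h) • (B * diagonal e)) (a z Δ : n → ℝ) :
    z ⬝ᵥ diagonal e *ᵥ (Bh * diagonal a) *ᵥ Δ
      = (1 + h) * (Δ ⬝ᵥ (diagonal e * diagonal a) *ᵥ (Bᵀ *ᵥ z)) := by
  rw [mulVec_mulVec, ← Matrix.mul_assoc, hcomm, Matrix.smul_mul, smul_mulVec, dotProduct_smul,
    smul_eq_mul, Matrix.mul_assoc, ← mulVec_mulVec, dotProduct_mulVec, ← mulVec_transpose,
    ← dotProduct_transpose_mulVec, diagonal_mul_diagonal, diagonal_transpose]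

theorem power_balance_le {K B Bh : Matrix n n ℝ} {e : n → ℝ} {h σ : ℝ} (hσ : 0 < σ)
    (he : ∀ i, |e i| ≤ 1) (hcomm : diagonal e * Bh = (1 + h) • (B * diagonal e))
    (hK : ∀ v : n → ℝ, σ * (v ⬝ᵥ v) ≤ v ⬝ᵥ (diagonal e * K) *ᵥ v) (a z Δ d : n → ℝ) :
    z ⬝ᵥ diagonal e *ᵥ (-(K *ᵥ z) + (Bh * diagonal a) *ᵥ Δ + d)
        + (1 + h) * (Δ ⬝ᵥ (diagonal e * diagonal a) *ᵥ -(Bᵀ *ᵥ z))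
      ≤ 1 / (4 * σ) * (d ⬝ᵥ d) := by
  have hcross := cross_terms_cancel hcomm a z Δ
  have hdiss := hK z
  have hdist := dotProduct_diagonal_mulVec_le he hσ z d
  rw [← mulVec_mulVec] at hdiss
  simp only [mulVec_add, mulVec_neg, dotProduct_add, dotProduct_neg] at hcross ⊢
  linarith

end PowerBalance

theorem le_add_integral_of_hasDerivAt_le {φ φ' f : ℝ → ℝ} {t : ℝ} (ht : 0 ≤ t)
    (hφ : ∀ s, 0 ≤ s → HasDerivAt φ (φ' s) s) (hφf : ∀ s, 0 ≤ s → φ' s ≤ f s)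
    (hf : IntegrableOn f (Set.Ioi 0)) (hf0 : 0 ≤ᵐ[volume.restrict (Set.Ioi 0)] f) :
    φ t ≤ φ 0 + ∫ s in Set.Ioi 0, f s := by
  have hFTC := intervalIntegral.sub_le_integral_of_hasDeriv_right_of_le ht
    (fun x hx => (hφ x hx.1).continuousAt.continuousWithinAt)
    (fun x hx => (hφ x hx.1.le).hasDerivWithinAt)
    ((integrableOn_Icc_iff_integrableOn_Ioc).2 (hf.mono_set Set.Ioc_subset_Ioi_self))
    (fun x hx => hφf x hx.1.le)
  have hmono : ∫ s in Set.Ioc 0 t, f s ≤ ∫ s in Set.Ioi 0, f s :=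
    setIntegral_mono_set hf hf0 Set.Ioc_subset_Ioi_self.eventuallyLE
  rw [intervalIntegral.integral_of_le ht] at hFTC
  linarith

theorem stmt_15_general (N : ℕ) (hd hp : ℝ) (hhd0 : 0 ≤ hd) (v0 : ℝ)
    (r a m : Fin N → ℝ) (hm : ∀ i, 0 < m i)
    (σ : ℝ) (hσ : 0 < σ)
    (hσmin : ∀ v : Fin N → ℝ,
      σ * (v ⬝ᵥ v) ≤ v ⬝ᵥ ((Matrix.diagonal (fun i : Fin N => ((1 - hd) / (1 + hd)) ^ (i : ℕ)) *
        ((Bmat N + hp • absB N) * Matrix.diagonal r * (Bmat N)ᵀ)) *ᵥ v))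
    (d : ℝ → Fin N → ℝ)
    (hdint : MeasureTheory.IntegrableOn (fun s => d s ⬝ᵥ d s) (Set.Ioi (0 : ℝ)))
    (p Δ : ℝ → Fin N → ℝ)
    (hdyn : ∀ t : ℝ, 0 ≤ t →
      HasDerivAt p
        (-(((Bmat N + hp • absB N) * Matrix.diagonal r * (Bmat N)ᵀ) *ᵥ
            (Matrix.diagonal (fun i => (m i)⁻¹) *ᵥ p t - v0 • (fun _ : Fin N => (1:ℝ))))
          + ((Bmat N + hd • absB N) * Matrix.diagonal a) *ᵥ Δ t + d t) t ∧
      HasDerivAt Δ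
        (-((Bmat N)ᵀ *ᵥ (Matrix.diagonal (fun i => (m i)⁻¹) *ᵥ p t - v0 • (fun _ : Fin N => (1:ℝ))))) t)
    (t : ℝ) (ht : 0 ≤ t) :
    HamD hd v0 m a (p t) (Δ t) ≤ HamD hd v0 m a (p 0) (Δ 0) +
      (1 / (2 * σ)) * ∫ s in Set.Ioi (0 : ℝ), d s ⬝ᵥ d s := by
  have hdd : ∀ s, 0 ≤ d s ⬝ᵥ d s := fun s => Finset.sum_nonneg fun i _ => mul_self_nonneg _
  have hquarter : ∀ s, 1 / (4 * σ) * (d s ⬝ᵥ d s) ≤ 1 / (2 * σ) * (d s ⬝ᵥ d s) := fun s => by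
    gcongr
    · exact hdd s
    · linarith
  rw [← integral_const_mul]
  refine le_add_integral_of_hasDerivAt_le ht
    (fun s hs => hasDerivAt_HamD hd v0 (fun i => (hm i).ne') a (hdyn s hs).1 (hdyn s hs).2)
    (fun s _ => (power_balance_le hσ (fun i : Fin N => abs_geometric_weight_le_one hhd0 i)
      (diagonal_geometric_mul_Bmat_add_smul_absB (by linarith)) hσmin a _ _ _).trans
        (hquarter s))
    (hdint.const_mul _) (ae_of_all _ fun s => mul_nonneg (by positivity) (hdd s))

/-- disturbance bound on the scaled Hamiltonian H_Δ for the APAV string. -/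
theorem stmt_15 (N : ℕ) (hN : 1 ≤ N) (hd hp : ℝ) (hhd0 : 0 ≤ hd) (hhd1 : hd < 1)
    (hhp : 0 ≤ hp) (v0 : ℝ)
    (r a m : Fin N → ℝ) (hr : ∀ i, 0 < r i) (ha : ∀ i, 0 < a i) (hm : ∀ i, 0 < m i)
    (σ : ℝ) (hσ : 0 < σ)
    (hσmin : ∀ v : Fin N → ℝ,
      σ * (v ⬝ᵥ v) ≤ v ⬝ᵥ ((Matrix.diagonal (fun i : Fin N => ((1 - hd) / (1 + hd)) ^ (i : ℕ)) *
        ((Bmat N + hp • absB N) * Matrix.diagonal r * (Bmat N)ᵀ)) *ᵥ v))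
    (d : ℝ → Fin N → ℝ) (hdmeas : Measurable d)
    (hdint : MeasureTheory.IntegrableOn (fun s => d s ⬝ᵥ d s) (Set.Ioi (0 : ℝ)))
    (p Δ : ℝ → Fin N → ℝ)
    (hdyn : ∀ t : ℝ, 0 ≤ t →
      HasDerivAt p
        (-(((Bmat N + hp • absB N) * Matrix.diagonal r * (Bmat N)ᵀ) *ᵥ
            (Matrix.diagonal (fun i => (m i)⁻¹) *ᵥ p t - v0 • (fun _ : Fin N => (1:ℝ))))
          + ((Bmat N + hd • absB N) * Matrix.diagonal a) *ᵥ Δ t + d t) t ∧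
      HasDerivAt Δ
        (-((Bmat N)ᵀ *ᵥ (Matrix.diagonal (fun i => (m i)⁻¹) *ᵥ p t - v0 • (fun _ : Fin N => (1:ℝ))))) t)
    (t : ℝ) (ht : 0 ≤ t) :
    HamD hd v0 m a (p t) (Δ t) ≤ HamD hd v0 m a (p 0) (Δ 0) +
      (1 / (2 * σ)) * ∫ s in Set.Ioi (0 : ℝ), d s ⬝ᵥ d s :=
  stmt_15_general N hd hp hhd0 v0 r a m hm σ hσ hσmin d hdint p Δ hdyn t ht
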